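/- Let f: X → Y be a 𝒯-functor between cocomplete 𝒯-categories, and let Sup_X ⊣ y_X and Sup_Y ⊣ y_Y be the left adjoints of the Yoneda functors. The following are equivalent: (i) f is left adjoint; (ii) f is cocontinuous (preserves all weighted colimits); (iii) f · Sup_X ≅ Sup_Y · f̂. -/

import Mathlib

/-!
A left adjoint `f ⊣ g` satisfies `f_* = g^*`, which turns `h_* ⟜ ψ` into `(f·h)_* ⟜ ψ`;
conversely, if `f` is cocontinuous, the `f_*`-weighted colimit of `1_X` (which `f` preserves)
is a right adjoint of `f`.

For (iii), equivalence of `𝒯`-functors into `Y` is equivalence in the underlying order, and the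
underlying order of `X̂` is the pointwise order of presheaves, so that `Sup ψ` is the least `x`
with `ψ ≤ a(-, x)`. As `f̂ ψ ≤ b(-, y)` whenever `ψ ≤ b(Tf -, y)`, one always has
`Sup_Y (f̂ ψ) ≤ f (Sup_X ψ)`; the reverse inequality follows from `ψ ≤ f̂ ψ · Tf` and `f ⊣ g`.
Conversely, under (iii) the map `y ↦ Sup_X (b(Tf -, y))` is a right adjoint of `f`.
-/

universe u

namespace Paper

/-- A strict topological theory `𝒯 = (𝕋, V, ξ)`: a commutative unital quantale `V`
(a complete lattice with a commutative monoid structure whose multiplication preserves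
suprema in each variable, with `⊥ < k`), a `Set`-monad `𝕋 = (T, e, m)` such that `T`
sends pullbacks to weak pullbacks and the naturality squares of `m` are weak pullbacks,
and a `𝕋`-algebra structure `ξ : T V → V` for which `⊗` and `k` are `𝕋`-algebra
homomorphisms and `ξ_X := ξ ∘ T(-)` is a (monotone) natural transformation
`P_V → P_V T`. -/
structure TopTheory (V : Type u) [CompleteLattice V] (T : Type u → Type u) where
  tens : V → V → V
  unit : V
  tens_comm : ∀ u v : V, tens u v = tens v u
  tens_assoc : ∀ u v w : V, tens (tens u v) w = tens u (tens v w)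
  unit_tens : ∀ v : V, tens unit v = v
  tens_sSup : ∀ (u : V) (S : Set V), tens u (sSup S) = ⨆ v ∈ S, tens u v
  bot_lt_unit : (⊥ : V) < unit
  map : ∀ {X Y : Type u}, (X → Y) → T X → T Y
  map_id : ∀ {X : Type u}, map (id : X → X) = id
  map_comp : ∀ {X Y Z : Type u} (g : Y → Z) (f : X → Y) (𝔵 : T X),
    map (g ∘ f) 𝔵 = map g (map f 𝔵)
  e : ∀ {X : Type u}, X → T X
  m : ∀ {X : Type u}, T (T X) → T X
  e_nat : ∀ {X Y : Type u} (f : X → Y) (x : X), map f (e x) = e (f x)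
  m_nat : ∀ {X Y : Type u} (f : X → Y) (𝔛 : T (T X)), map f (m 𝔛) = m (map (map f) 𝔛)
  m_e : ∀ {X : Type u} (𝔵 : T X), m (e 𝔵) = 𝔵
  m_map_e : ∀ {X : Type u} (𝔵 : T X), m (map e 𝔵) = 𝔵
  m_assoc : ∀ {X : Type u} (𝔜 : T (T (T X))), m (m 𝔜) = m (map m 𝔜)
  /-- (BC): `T` sends pullbacks to weak pullbacks. -/
  map_bc : ∀ {X Y Z : Type u} (f : X → Z) (g : Y → Z) (𝔵 : T X) (𝔶 : T Y),
    map f 𝔵 = map g 𝔶 →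
    ∃ 𝔴 : T {p : X × Y // f p.1 = g p.2},
      map (fun p => p.1.1) 𝔴 = 𝔵 ∧ map (fun p => p.1.2) 𝔴 = 𝔶
  /-- (BC): every naturality square of `m` is a weak pullback. -/
  m_bc : ∀ {X Y : Type u} (f : X → Y) (𝔜 : T (T Y)) (𝔵 : T X),
    m 𝔜 = map f 𝔵 → ∃ 𝔛 : T (T X), map (map f) 𝔛 = 𝔜 ∧ m 𝔛 = 𝔵
  xi : T V → V
  xi_e : ∀ v : V, xi (e v) = v
  xi_m : ∀ 𝔙 : T (T V), xi (m 𝔙) = xi (map xi 𝔙)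
  /-- `k : 1 → V` is a `𝕋`-algebra homomorphism. -/
  xi_unit : ∀ {X : Type u} (𝔵 : T X), xi (map (fun _ => unit) 𝔵) = unit
  /-- `⊗ : V × V → V` is a `𝕋`-algebra homomorphism. -/
  xi_tens : ∀ 𝔴 : T (V × V),
    xi (map (fun p => tens p.1 p.2) 𝔴) = tens (xi (map Prod.fst 𝔴)) (xi (map Prod.snd 𝔴))
  /-- each component `ξ_X : V^X → V^{T X}` is monotone. -/
  xi_mono : ∀ {X : Type u} (φ φ' : X → V), (∀ x, φ x ≤ φ' x) →
    ∀ 𝔵 : T X, xi (map φ 𝔵) ≤ xi (map φ' 𝔵)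
  /-- `ξ_X` is a natural transformation `P_V → P_V T`. -/
  xi_nat : ∀ {X Y : Type u} (f : X → Y) (φ : X → V) (𝔶 : T Y),
    (⨆ 𝔵 : {𝔵 : T X // map f 𝔵 = 𝔶}, xi (map φ 𝔵.1)) =
      xi (map (fun y => ⨆ x : {x : X // f x = y}, φ x.1) 𝔶)

namespace TopTheory

variable {V : Type u} [CompleteLattice V] {T : Type u → Type u}

/-- The internal hom of the quantale: `u ⊗ (-) ⊣ hom (u, -)`. -/
def ihom (𝒯 : TopTheory V T) (u w : V) : V := sSup {z | 𝒯.tens u z ≤ w}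

/-- The extension `T_ξ` of `T : Set → Set` to `V`-relations. -/
def Txi (𝒯 : TopTheory V T) {X Y : Type u} (r : X → Y → V) (𝔵 : T X) (𝔶 : T Y) : V :=
  ⨆ 𝔴 : {w : T (X × Y) // 𝒯.map Prod.fst w = 𝔵 ∧ 𝒯.map Prod.snd w = 𝔶},
    𝒯.xi (𝒯.map (fun p => r p.1 p.2) 𝔴.1)

/-- Kleisli convolution `β ∘ α = β · T_ξ α · m_X°` of `𝒯`-relations
`α : X ⇸ Y` and `β : Y ⇸ Z`. -/
def kleisli (𝒯 : TopTheory V T) {X Y Z : Type u}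
    (β : T Y → Z → V) (α : T X → Y → V) (𝔵 : T X) (z : Z) : V :=
  ⨆ 𝔛 : {𝔛 : T (T X) // 𝒯.m 𝔛 = 𝔵}, ⨆ 𝔶 : T Y, 𝒯.tens (𝒯.Txi α 𝔛.1 𝔶) (β 𝔶 z)

/-- The `𝒯`-relation `e_X° : X ⇸ X`. -/
def unitRel (𝒯 : TopTheory V T) (X : Type u) (𝔵 : T X) (x : X) : V :=
  ⨆ _ : 𝔵 = 𝒯.e x, 𝒯.unit

/-- A `𝒯`-category structure on `X`: a `𝒯`-relation `a : X ⇸ X` with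
`e_X° ≤ a` and `a ∘ a ≤ a`. -/
structure TCatStr (𝒯 : TopTheory V T) (X : Type u) where
  rel : T X → X → V
  le_refl : ∀ x : X, 𝒯.unit ≤ rel (𝒯.e x) x
  comp : ∀ (𝔵 : T X) (x : X), 𝒯.kleisli rel rel 𝔵 x ≤ rel 𝔵 x

/-- The `𝒯`-module conditions `φ ∘ a ≤ φ` and `b ∘ φ ≤ φ` for a `𝒯`-relation
`φ : X ⇸ Y` between (structures underlying) `𝒯`-categories `(X,a)` and `(Y,b)`. -/
def IsTModRel (𝒯 : TopTheory V T) {X Y : Type u}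
    (a : T X → X → V) (b : T Y → Y → V) (φ : T X → Y → V) : Prop :=
  (∀ 𝔵 y, 𝒯.kleisli φ a 𝔵 y ≤ φ 𝔵 y) ∧ (∀ 𝔵 y, 𝒯.kleisli b φ 𝔵 y ≤ φ 𝔵 y)

variable {𝒯 : TopTheory V T}

/-- `f_* = b · T f`. -/
def modStar {X Y : Type u} (b : 𝒯.TCatStr Y) (f : X → Y) (𝔵 : T X) (y : Y) : V :=
  b.rel (𝒯.map f 𝔵) y

/-- `f^* = f° · b`. -/
def modCostar {X Y : Type u} (b : 𝒯.TCatStr Y) (f : X → Y) (𝔶 : T Y) (x : X) : V :=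
  b.rel 𝔶 (f x)

/-- The extension `φ ⟜ ψ` of `φ : X ⇸∘ Y` along `ψ : X ⇸∘ Z`, given by
`(φ ⟜ ψ)(𝔷,y) = ⋀_{𝔵 ∈ T X} hom((T_ξ ψ · m_X°)(𝔵,𝔷), φ(𝔵,y))`. -/
def extend (𝒯 : TopTheory V T) {X Y Z : Type u}
    (φ : T X → Y → V) (ψ : T X → Z → V) (𝔷 : T Z) (y : Y) : V :=
  ⨅ 𝔵 : T X, 𝒯.ihom (⨆ 𝔛 : {𝔛 : T (T X) // 𝒯.m 𝔛 = 𝔵}, 𝒯.Txi ψ 𝔛.1 𝔷) (φ 𝔵 y)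

/-- A `𝒯`-functor `f : (X,a) → (Y,b)`. -/
def IsTFunctor {X Y : Type u} (a : 𝒯.TCatStr X) (b : 𝒯.TCatStr Y) (f : X → Y) : Prop :=
  ∀ (𝔵 : T X) (x : X), a.rel 𝔵 x ≤ b.rel (𝒯.map f 𝔵) (f x)

/-- A fully faithful `𝒯`-functor. -/
def FullyFaithful {X Y : Type u} (a : 𝒯.TCatStr X) (b : 𝒯.TCatStr Y) (f : X → Y) : Prop :=
  ∀ (𝔵 : T X) (x : X), a.rel 𝔵 x = b.rel (𝒯.map f 𝔵) (f x)

/-- The order `f ≤ g ⟺ f^* ≤ g^*` on `𝒯`-functors `X → (Y,b)`. -/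
def funLE {X Y : Type u} (b : 𝒯.TCatStr Y) (f g : X → Y) : Prop :=
  ∀ (𝔶 : T Y) (x : X), b.rel 𝔶 (f x) ≤ b.rel 𝔶 (g x)

/-- Equivalence `f ≅ g ⟺ f^* = g^*` of `𝒯`-functors `X → (Y,b)`. -/
def FunEquiv {X Y : Type u} (b : 𝒯.TCatStr Y) (f g : X → Y) : Prop :=
  ∀ (𝔶 : T Y) (x : X), b.rel 𝔶 (f x) = b.rel 𝔶 (g x)

/-- `f ⊣ g`:  `1_X ≤ g·f` and `f·g ≤ 1_Y`. -/
def IsAdjunction {X Y : Type u} (a : 𝒯.TCatStr X) (b : 𝒯.TCatStr Y)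
    (f : X → Y) (g : Y → X) : Prop :=
  (∀ (𝔵 : T X) (x : X), a.rel 𝔵 x ≤ a.rel 𝔵 (g (f x))) ∧
    (∀ (𝔶 : T Y) (y : Y), b.rel 𝔶 (f (g y)) ≤ b.rel 𝔶 y)

/-- A left adjoint `𝒯`-functor. -/
def IsLeftAdjoint {X Y : Type u} (a : 𝒯.TCatStr X) (b : 𝒯.TCatStr Y) (f : X → Y) : Prop :=
  IsTFunctor a b f ∧ ∃ g : Y → X, IsTFunctor b a g ∧ IsAdjunction a b f g

/-- L-separatedness: equivalent `𝒯`-functors into `X` are equal. -/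
def Separated {X : Type u} (a : 𝒯.TCatStr X) : Prop :=
  ∀ (A : Type u) (as : 𝒯.TCatStr A) (f g : A → X),
    IsTFunctor as a f → IsTFunctor as a g → FunEquiv a f g → f = g

/-- Injectivity with respect to fully faithful `𝒯`-functors. -/
def Injective {X : Type u} (a : 𝒯.TCatStr X) : Prop :=
  ∀ (A B : Type u) (as : 𝒯.TCatStr A) (bs : 𝒯.TCatStr B) (f : A → X) (i : A → B),
    IsTFunctor as a f → IsTFunctor as bs i → FullyFaithful as bs i →
      ∃ g : B → X, IsTFunctor bs a g ∧ FunEquiv a (g ∘ i) f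

/-- `g : Z → X` is the `ψ`-weighted colimit of `h : A → X`, i.e. `g_* = h_* ⟜ ψ`. -/
def IsColimit {X A Z : Type u} (a : 𝒯.TCatStr X) (h : A → X) (ψ : T A → Z → V)
    (g : Z → X) : Prop :=
  ∀ (𝔷 : T Z) (x : X), modStar a g 𝔷 x = 𝒯.extend (modStar a h) ψ 𝔷 x

/-- Cocompleteness: every weighted diagram has a colimit. -/
def Cocomplete {X : Type u} (a : 𝒯.TCatStr X) : Prop :=
  ∀ (A Z : Type u) (as : 𝒯.TCatStr A) (cs : 𝒯.TCatStr Z) (h : A → X),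
    IsTFunctor as a h → ∀ ψ : T A → Z → V, 𝒯.IsTModRel as.rel cs.rel ψ →
      ∃ g : Z → X, IsTFunctor cs a g ∧ IsColimit a h ψ g

/-- Cocontinuity: preservation of all weighted colimits. -/
def Cocontinuous {X Y : Type u} (a : 𝒯.TCatStr X) (b : 𝒯.TCatStr Y) (f : X → Y) : Prop :=
  ∀ (A Z : Type u) (as : 𝒯.TCatStr A) (cs : 𝒯.TCatStr Z) (h : A → X)
    (ψ : T A → Z → V) (g : Z → X),
    IsTFunctor as a h → 𝒯.IsTModRel as.rel cs.rel ψ → IsTFunctor cs a g →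
      IsColimit a h ψ g → IsColimit b (f ∘ h) ψ (f ∘ g)

/-- A presheaf on `(X,a)`: a `𝒯`-module `X ⇸∘ G`, where `G = (1, e_1°)`. -/
def IsPresheaf {X : Type u} (a : 𝒯.TCatStr X) (ψ : T X → V) : Prop :=
  𝒯.IsTModRel a.rel (𝒯.unitRel PUnit) (fun 𝔵 _ => ψ 𝔵)

/-- The underlying set of the presheaf `𝒯`-category `X̂`. -/
def Hat {X : Type u} (a : 𝒯.TCatStr X) : Type u := {ψ : T X → V // IsPresheaf a ψ}

/-- The `𝒯`-category structure `⟦-,-⟧` of `V^{|X|}`. -/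
def powRel (𝒯 : TopTheory V T) (X : Type u) (𝔭 : T (T X → V)) (ψ : T X → V) : V :=
  ⨅ 𝔮 : {q : T ((T X) × (T X → V)) // 𝒯.map Prod.snd q = 𝔭},
    𝒯.ihom (𝒯.xi (𝒯.map (fun p => p.2 p.1) 𝔮.1)) (ψ (𝒯.m (𝒯.map Prod.fst 𝔮.1)))

/-- `hs` is the `𝒯`-category structure on `X̂` inherited from `V^{|X|}`. -/
def IsHatStr {X : Type u} (a : 𝒯.TCatStr X) (hs : 𝒯.TCatStr (Hat a)) : Prop :=
  ∀ (𝔭 : T (Hat a)) (ψ : Hat a), hs.rel 𝔭 ψ = 𝒯.powRel X (𝒯.map Subtype.val 𝔭) ψ.1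

/-- `y` is the Yoneda functor `X → X̂`, `y x = a(-,x)`. -/
def IsYoneda {X : Type u} (a : 𝒯.TCatStr X) (y : X → Hat a) : Prop :=
  ∀ (x : X) (𝔵 : T X), (y x).1 𝔵 = a.rel 𝔵 x

/-- The underlying map `ψ ↦ ψ ∘ f^*` of `f̂ : X̂ → Ŷ`. -/
def hatMapRel {X Y : Type u} (b : 𝒯.TCatStr Y) (f : X → Y) (ψ : T X → V) (𝔶 : T Y) : V :=
  𝒯.kleisli (fun 𝔵 (_ : PUnit.{u + 1}) => ψ 𝔵) (modCostar b f) 𝔶 PUnit.unit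

/-- `fh` is the `𝒯`-functor `f̂ : X̂ → Ŷ`, with underlying map `ψ ↦ ψ ∘ f^*`. -/
def IsHatMap {X Y : Type u} (a : 𝒯.TCatStr X) (b : 𝒯.TCatStr Y) (f : X → Y)
    (fh : Hat a → Hat b) : Prop :=
  ∀ (ψ : Hat a) (𝔶 : T Y), (fh ψ).1 𝔶 = hatMapRel b f ψ.1 𝔶

/-- An inhabited `𝒯`-module: `k ≤ ⋀_y ⋁_𝔵 φ(𝔵,y)`. -/
def InhabitedMod (𝒯 : TopTheory V T) {X Y : Type u} (φ : T X → Y → V) : Prop :=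
  𝒯.unit ≤ ⨅ y : Y, ⨆ 𝔵 : T X, φ 𝔵 y

/-- A dense `𝒯`-functor: `f_*` is inhabited. -/
def Dense {X Y : Type u} (b : 𝒯.TCatStr Y) (f : X → Y) : Prop :=
  𝒯.InhabitedMod (modStar b f)

/-- The underlying set of `X⁺ = {ψ ∈ X̂ ∣ ψ inhabited}`. -/
def Plus {X : Type u} (a : 𝒯.TCatStr X) : Type u :=
  {ψ : Hat a // 𝒯.InhabitedMod (fun 𝔵 (_ : PUnit.{u + 1}) => ψ.1 𝔵)}

/-- `ps` is the `𝒯`-category structure on `X⁺` inherited from `X̂`. -/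
def IsPlusStr {X : Type u} (a : 𝒯.TCatStr X) (hs : 𝒯.TCatStr (Hat a))
    (ps : 𝒯.TCatStr (Plus a)) : Prop :=
  ∀ (𝔭 : T (Plus a)) (ψ : Plus a), ps.rel 𝔭 ψ = hs.rel (𝒯.map Subtype.val 𝔭) ψ.1

/-- Inhabited-cocompleteness: all colimits with inhabited weights exist. -/
def ICocomplete {X : Type u} (a : 𝒯.TCatStr X) : Prop :=
  ∀ (A Z : Type u) (as : 𝒯.TCatStr A) (cs : 𝒯.TCatStr Z) (h : A → X),
    IsTFunctor as a h → ∀ ψ : T A → Z → V, 𝒯.IsTModRel as.rel cs.rel ψ →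
      𝒯.InhabitedMod ψ → ∃ g : Z → X, IsTFunctor cs a g ∧ IsColimit a h ψ g

/-- Inhabited-cocontinuity: preservation of all colimits with inhabited weights. -/
def ICocontinuous {X Y : Type u} (a : 𝒯.TCatStr X) (b : 𝒯.TCatStr Y) (f : X → Y) : Prop :=
  ∀ (A Z : Type u) (as : 𝒯.TCatStr A) (cs : 𝒯.TCatStr Z) (h : A → X)
    (ψ : T A → Z → V) (g : Z → X),
    IsTFunctor as a h → 𝒯.IsTModRel as.rel cs.rel ψ → 𝒯.InhabitedMod ψ →
      IsTFunctor cs a g → IsColimit a h ψ g → IsColimit b (f ∘ h) ψ (f ∘ g)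

section Quantale

variable (𝒯)

lemma tens_mono_right {u v w : V} (h : v ≤ w) : 𝒯.tens u v ≤ 𝒯.tens u w := by
  have hw : 𝒯.tens u w = ⨆ z ∈ ({v, w} : Set V), 𝒯.tens u z := by
    rw [← 𝒯.tens_sSup, sSup_pair, sup_of_le_right h]
  rw [hw]
  exact le_iSup₂_of_le v (Set.mem_insert v _) le_rfl

lemma tens_mono_left {u v w : V} (h : u ≤ v) : 𝒯.tens u w ≤ 𝒯.tens v w := by
  rw [𝒯.tens_comm u, 𝒯.tens_comm v]
  exact 𝒯.tens_mono_right h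

lemma tens_unit (u : V) : 𝒯.tens u 𝒯.unit = u := by
  rw [𝒯.tens_comm, 𝒯.unit_tens]

lemma le_ihom_iff {u z w : V} : z ≤ 𝒯.ihom u w ↔ 𝒯.tens u z ≤ w := by
  refine ⟨fun h => (𝒯.tens_mono_right h).trans ?_, fun h => le_sSup h⟩
  rw [ihom, 𝒯.tens_sSup]
  exact iSup₂_le fun _ hz => hz

lemma unit_le_ihom_iff {u w : V} : 𝒯.unit ≤ 𝒯.ihom u w ↔ u ≤ w := by
  rw [le_ihom_iff, tens_unit]

lemma le_of_le_ihom {u z w : V} (hu : 𝒯.unit ≤ u) (h : z ≤ 𝒯.ihom u w) : z ≤ w :=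
  calc z = 𝒯.tens 𝒯.unit z := (𝒯.unit_tens z).symm
    _ ≤ 𝒯.tens u z := 𝒯.tens_mono_left hu
    _ ≤ w := (𝒯.le_ihom_iff).1 h

end Quantale

section Monad

variable (𝒯)

lemma map_map {X Y Z : Type u} (g : Y → Z) (f : X → Y) (𝔵 : T X) :
    𝒯.map g (𝒯.map f 𝔵) = 𝒯.map (fun x => g (f x)) 𝔵 :=
  (𝒯.map_comp g f 𝔵).symm

lemma map_eq_map_of_map_eq_e {C Y D : Type u} (h : C → Y) (φ : C → Y → D) {𝔠 : T C} {y₀ : Y}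
    (hc : 𝒯.map h 𝔠 = 𝒯.e y₀) :
    𝒯.map (fun c => φ c (h c)) 𝔠 = 𝒯.map (fun c => φ c y₀) 𝔠 := by
  -- by (BC), `𝔠` lifts to the fibre of `h` over `y₀`
  obtain ⟨𝔰, h𝔰, -⟩ := 𝒯.map_bc h (Subtype.val : {y // y = y₀} → Y) 𝔠 (𝒯.e ⟨y₀, rfl⟩)
    (by rw [𝒯.e_nat]; exact hc)
  rw [← h𝔰, map_map, map_map]
  congr 1
  funext s
  simp only [s.2, s.1.2.2]

lemma unit_le_xi {X : Type u} {φ : X → V} (h : ∀ x, 𝒯.unit ≤ φ x) (𝔵 : T X) :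
    𝒯.unit ≤ 𝒯.xi (𝒯.map φ 𝔵) := by
  simpa only [𝒯.xi_unit] using 𝒯.xi_mono (fun _ => 𝒯.unit) φ h 𝔵

lemma le_Txi {X Y : Type u} (r : X → Y → V) {𝔵 : T X} {𝔶 : T Y} (𝔴 : T (X × Y))
    (h₁ : 𝒯.map Prod.fst 𝔴 = 𝔵) (h₂ : 𝒯.map Prod.snd 𝔴 = 𝔶) :
    𝒯.xi (𝒯.map (fun p => r p.1 p.2) 𝔴) ≤ 𝒯.Txi r 𝔵 𝔶 :=
  le_iSup (fun 𝔴' : {w : T (X × Y) // 𝒯.map Prod.fst w = 𝔵 ∧ 𝒯.map Prod.snd w = 𝔶} =>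
    𝒯.xi (𝒯.map (fun p => r p.1 p.2) 𝔴'.1)) ⟨𝔴, h₁, h₂⟩

lemma Txi_le {X Y : Type u} {r : X → Y → V} {𝔵 : T X} {𝔶 : T Y} {c : V}
    (h : ∀ 𝔴 : T (X × Y), 𝒯.map Prod.fst 𝔴 = 𝔵 → 𝒯.map Prod.snd 𝔴 = 𝔶 →
      𝒯.xi (𝒯.map (fun p => r p.1 p.2) 𝔴) ≤ c) :
    𝒯.Txi r 𝔵 𝔶 ≤ c :=
  iSup_le fun 𝔴 => h 𝔴.1 𝔴.2.1 𝔴.2.2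

lemma xi_map_le_Txi {X Y Z : Type u} (r : X → Y → V) (p : Z → X) (q : Z → Y) (𝔷 : T Z) :
    𝒯.xi (𝒯.map (fun z => r (p z) (q z)) 𝔷) ≤ 𝒯.Txi r (𝒯.map p 𝔷) (𝒯.map q 𝔷) := by
  have h := 𝒯.le_Txi r (𝒯.map (fun z => (p z, q z)) 𝔷) (𝒯.map_map _ _ _) (𝒯.map_map _ _ _)
  rwa [map_map] at h

lemma le_Txi_e {X Y : Type u} (r : X → Y → V) (x : X) (y : Y) :
    r x y ≤ 𝒯.Txi r (𝒯.e x) (𝒯.e y) := by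
  have h := 𝒯.le_Txi r (𝒯.e (x, y)) (𝒯.e_nat _ _) (𝒯.e_nat _ _)
  rwa [e_nat, xi_e] at h

lemma unit_le_Txi_map {X Y Z : Type u} (r : X → Y → V) (p : Z → X) (q : Z → Y)
    (h : ∀ z, 𝒯.unit ≤ r (p z) (q z)) (𝔷 : T Z) :
    𝒯.unit ≤ 𝒯.Txi r (𝒯.map p 𝔷) (𝒯.map q 𝔷) :=
  (𝒯.unit_le_xi h 𝔷).trans (𝒯.xi_map_le_Txi r p q 𝔷)

lemma Txi_le_Txi_map {X Y Z W : Type u} (r : X → Y → V) (s : Z → W → V) (φ : X → Z)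
    (ψ : Y → W) (h : ∀ x y, r x y ≤ s (φ x) (ψ y)) (𝔵 : T X) (𝔶 : T Y) :
    𝒯.Txi r 𝔵 𝔶 ≤ 𝒯.Txi s (𝒯.map φ 𝔵) (𝒯.map ψ 𝔶) := by
  refine 𝒯.Txi_le fun 𝔴 h₁ h₂ => ?_
  rw [← h₁, ← h₂, map_map, map_map]
  exact (𝒯.xi_mono _ _ (fun p => h p.1 p.2) 𝔴).trans (𝒯.xi_map_le_Txi s _ _ 𝔴)

lemma Txi_comp_left_le {X Y Z : Type u} (r : X → Y → V) (p : Z → X) (𝔷 : T Z) (𝔶 : T Y) :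
    𝒯.Txi (fun z => r (p z)) 𝔷 𝔶 ≤ 𝒯.Txi r (𝒯.map p 𝔷) 𝔶 := by
  simpa only [𝒯.map_id, id] using 𝒯.Txi_le_Txi_map _ r p id (fun _ _ => le_rfl) 𝔷 𝔶

lemma Txi_comp_right_le {X Y Z : Type u} (r : X → Y → V) (q : Z → Y) (𝔵 : T X) (𝔷 : T Z) :
    𝒯.Txi (fun x z => r x (q z)) 𝔵 𝔷 ≤ 𝒯.Txi r 𝔵 (𝒯.map q 𝔷) := by
  simpa only [𝒯.map_id, id] using 𝒯.Txi_le_Txi_map _ r id q (fun _ _ => le_rfl) 𝔵 𝔷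

lemma le_kleisli {X Y Z : Type u} (β : T Y → Z → V) (α : T X → Y → V) {𝔵 : T X} {z : Z}
    (𝔛 : T (T X)) (h : 𝒯.m 𝔛 = 𝔵) (𝔶 : T Y) :
    𝒯.tens (𝒯.Txi α 𝔛 𝔶) (β 𝔶 z) ≤ 𝒯.kleisli β α 𝔵 z :=
  le_iSup₂_of_le (f := fun (𝔛' : {𝔛' : T (T X) // 𝒯.m 𝔛' = 𝔵}) 𝔶' =>
    𝒯.tens (𝒯.Txi α 𝔛'.1 𝔶') (β 𝔶' z)) ⟨𝔛, h⟩ 𝔶 le_rfl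

lemma kleisli_le {X Y Z : Type u} {β : T Y → Z → V} {α : T X → Y → V} {𝔵 : T X} {z : Z}
    {c : V} (h : ∀ 𝔛 : T (T X), 𝒯.m 𝔛 = 𝔵 → ∀ 𝔶 : T Y, 𝒯.tens (𝒯.Txi α 𝔛 𝔶) (β 𝔶 z) ≤ c) :
    𝒯.kleisli β α 𝔵 z ≤ c :=
  iSup_le fun 𝔛 => iSup_le fun 𝔶 => h 𝔛.1 𝔛.2 𝔶

lemma kleisli_comp_map_le {X Y Z W : Type u} (β : T W → Z → V) (φ : T Y → W → V) (f : X → Y)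
    (𝔵 : T X) (z : Z) :
    𝒯.kleisli β (fun 𝔵' => φ (𝒯.map f 𝔵')) 𝔵 z ≤ 𝒯.kleisli β φ (𝒯.map f 𝔵) z :=
  𝒯.kleisli_le fun 𝔛 h𝔛 𝔴 => (𝒯.tens_mono_left (𝒯.Txi_comp_left_le φ (𝒯.map f) 𝔛 𝔴)).trans
    (𝒯.le_kleisli β φ _ (by rw [← 𝒯.m_nat, h𝔛]) 𝔴)

end Monad

section Category

variable {X Y Z : Type u}

def UnderlyingLE (a : 𝒯.TCatStr X) (x y : X) : Prop :=
  𝒯.unit ≤ a.rel (𝒯.e x) y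

lemma tens_rel_e_le (a : 𝒯.TCatStr X) (𝔵 : T X) (x y : X) :
    𝒯.tens (a.rel 𝔵 x) (a.rel (𝒯.e x) y) ≤ a.rel 𝔵 y :=
  calc _ ≤ 𝒯.tens (𝒯.Txi a.rel (𝒯.e 𝔵) (𝒯.e x)) (a.rel (𝒯.e x) y) :=
        𝒯.tens_mono_left (𝒯.le_Txi_e _ _ _)
    _ ≤ 𝒯.kleisli a.rel a.rel 𝔵 y := 𝒯.le_kleisli a.rel a.rel _ (𝒯.m_e 𝔵) _
    _ ≤ a.rel 𝔵 y := a.comp 𝔵 y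

lemma UnderlyingLE.rel_le {a : 𝒯.TCatStr X} {x y : X} (h : UnderlyingLE a x y) (𝔵 : T X) :
    a.rel 𝔵 x ≤ a.rel 𝔵 y :=
  calc a.rel 𝔵 x = 𝒯.tens (a.rel 𝔵 x) 𝒯.unit := (𝒯.tens_unit _).symm
    _ ≤ 𝒯.tens (a.rel 𝔵 x) (a.rel (𝒯.e x) y) := 𝒯.tens_mono_right h
    _ ≤ a.rel 𝔵 y := tens_rel_e_le a 𝔵 x y

lemma UnderlyingLE.trans {a : 𝒯.TCatStr X} {x y z : X} (hxy : UnderlyingLE a x y)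
    (hyz : UnderlyingLE a y z) : UnderlyingLE a x z :=
  le_trans hxy (hyz.rel_le _)

lemma funEquiv_of_underlyingLE {b : 𝒯.TCatStr Y} {g h : X → Y}
    (hgh : ∀ x, UnderlyingLE b (g x) (h x)) (hhg : ∀ x, UnderlyingLE b (h x) (g x)) :
    FunEquiv b g h :=
  fun 𝔶 x => le_antisymm ((hgh x).rel_le 𝔶) ((hhg x).rel_le 𝔶)

lemma FunEquiv.underlyingLE {b : 𝒯.TCatStr Y} {g h : X → Y} (hgh : FunEquiv b g h) (x : X) :
    UnderlyingLE b (g x) (h x) :=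
  (b.le_refl (g x)).trans_eq (hgh _ x)

lemma rel_map_le_of_underlyingLE {a : 𝒯.TCatStr X} {h : X → X}
    (hh : ∀ x, UnderlyingLE a x (h x)) (𝔵 : T X) (x : X) :
    a.rel (𝒯.map h 𝔵) x ≤ a.rel 𝔵 x :=
  calc a.rel (𝒯.map h 𝔵) x = 𝒯.tens 𝒯.unit (a.rel (𝒯.map h 𝔵) x) := (𝒯.unit_tens _).symm
    _ ≤ 𝒯.tens (𝒯.Txi a.rel (𝒯.map 𝒯.e 𝔵) (𝒯.map h 𝔵)) (a.rel (𝒯.map h 𝔵) x) :=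
        𝒯.tens_mono_left (𝒯.unit_le_Txi_map a.rel 𝒯.e h hh 𝔵)
    _ ≤ 𝒯.kleisli a.rel a.rel 𝔵 x := 𝒯.le_kleisli a.rel a.rel _ (𝒯.m_map_e 𝔵) _
    _ ≤ a.rel 𝔵 x := a.comp 𝔵 x

lemma Txi_e_le (a : 𝒯.TCatStr X) (𝔛 : T (T X)) (x : X) :
    𝒯.Txi a.rel 𝔛 (𝒯.e x) ≤ a.rel (𝒯.m 𝔛) x :=
  calc _ = 𝒯.tens (𝒯.Txi a.rel 𝔛 (𝒯.e x)) 𝒯.unit := (𝒯.tens_unit _).symm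
    _ ≤ 𝒯.tens (𝒯.Txi a.rel 𝔛 (𝒯.e x)) (a.rel (𝒯.e x) x) := 𝒯.tens_mono_right (a.le_refl x)
    _ ≤ 𝒯.kleisli a.rel a.rel (𝒯.m 𝔛) x := 𝒯.le_kleisli a.rel a.rel 𝔛 rfl _
    _ ≤ a.rel (𝒯.m 𝔛) x := a.comp _ x

lemma isTFunctor_id (a : 𝒯.TCatStr X) : IsTFunctor a a id := fun 𝔵 x => by
  rw [𝒯.map_id]; rfl

lemma IsTFunctor.comp {a : 𝒯.TCatStr X} {b : 𝒯.TCatStr Y} {c : 𝒯.TCatStr Z} {f : X → Y}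
    {g : Y → Z} (hf : IsTFunctor a b f) (hg : IsTFunctor b c g) : IsTFunctor a c (g ∘ f) :=
  fun 𝔵 x => by
    rw [𝒯.map_comp]
    exact (hf 𝔵 x).trans (hg _ (f x))

variable {a : 𝒯.TCatStr X} {b : 𝒯.TCatStr Y} {f : X → Y}

lemma IsTFunctor.underlyingLE (hf : IsTFunctor a b f) {x y : X} (h : UnderlyingLE a x y) :
    UnderlyingLE b (f x) (f y) := by
  have hfe := hf (𝒯.e x) y
  rw [𝒯.e_nat] at hfe
  exact le_trans h hfe

end Category

section Adjunction

variable {X Y : Type u} {a : 𝒯.TCatStr X} {b : 𝒯.TCatStr Y} {f : X → Y} {g : Y → X}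

lemma IsAdjunction.underlyingLE_unit (hadj : IsAdjunction a b f g) (x : X) :
    UnderlyingLE a x (g (f x)) :=
  le_trans (a.le_refl x) (hadj.1 _ x)

lemma IsAdjunction.underlyingLE_counit (hadj : IsAdjunction a b f g) (y : Y) :
    UnderlyingLE b (f (g y)) y :=
  le_trans (b.le_refl _) (hadj.2 _ y)

lemma IsAdjunction.underlyingLE_of_le_right (hadj : IsAdjunction a b f g)
    (hf : IsTFunctor a b f) {x : X} {y : Y} (h : UnderlyingLE a x (g y)) :
    UnderlyingLE b (f x) y :=
  (hf.underlyingLE h).trans (hadj.underlyingLE_counit y)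

lemma IsAdjunction.modStar_eq_modCostar (hadj : IsAdjunction a b f g) (hf : IsTFunctor a b f)
    (hg : IsTFunctor b a g) (𝔵 : T X) (y : Y) : modStar b f 𝔵 y = modCostar a g 𝔵 y := by
  refine le_antisymm ?_ ((hf 𝔵 (g y)).trans (hadj.2 _ y))
  calc b.rel (𝒯.map f 𝔵) y ≤ a.rel (𝒯.map g (𝒯.map f 𝔵)) (g y) := hg _ y
    _ = a.rel (𝒯.map (fun x => g (f x)) 𝔵) (g y) := by rw [map_map]
    _ ≤ a.rel 𝔵 (g y) := rel_map_le_of_underlyingLE hadj.underlyingLE_unit 𝔵 (g y)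

end Adjunction

section Colimit

variable {X Y Z : Type u} {a : 𝒯.TCatStr X} {b : 𝒯.TCatStr Y} {f : X → Y}

lemma modStar_comp (b : 𝒯.TCatStr Y) (f : X → Y) (k : Z → X) (𝔷 : T Z) (y : Y) :
    modStar b (f ∘ k) 𝔷 y = modStar b f (𝒯.map k 𝔷) y :=
  congrArg (b.rel · y) (𝒯.map_comp f k 𝔷)

lemma extend_le {φ : T X → Y → V} {ψ : T X → Z → V} {𝔷 : T Z} {𝔵 : T X} (𝔛 : T (T X))
    (h𝔛 : 𝒯.m 𝔛 = 𝔵) (h : 𝒯.unit ≤ 𝒯.Txi ψ 𝔛 𝔷) (y : Y) : 𝒯.extend φ ψ 𝔷 y ≤ φ 𝔵 y :=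
  𝒯.le_of_le_ihom (le_iSup_of_le (ι := {𝔛 : T (T X) // 𝒯.m 𝔛 = 𝔵}) ⟨𝔛, h𝔛⟩ h) (iInf_le _ 𝔵)

lemma unit_le_extend {φ : T X → Y → V} {ψ : T X → Z → V} {𝔷 : T Z} {y : Y}
    (h : ∀ 𝔛 : T (T X), 𝒯.Txi ψ 𝔛 𝔷 ≤ φ (𝒯.m 𝔛) y) : 𝒯.unit ≤ 𝒯.extend φ ψ 𝔷 y :=
  le_iInf fun _ => (𝒯.unit_le_ihom_iff).2 (iSup_le fun ⟨𝔛, h𝔛⟩ => h𝔛 ▸ h 𝔛)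

lemma kleisli_map_le (hf : IsTFunctor a b f) (φ : T Y → Z → V) (𝔵 : T X) (z : Z) :
    𝒯.kleisli (fun 𝔵' => φ (𝒯.map f 𝔵')) a.rel 𝔵 z ≤ 𝒯.kleisli φ b.rel (𝒯.map f 𝔵) z :=
  𝒯.kleisli_le fun 𝔛 h𝔛 𝔵' =>
    (𝒯.tens_mono_left (𝒯.Txi_le_Txi_map a.rel b.rel (𝒯.map f) f hf 𝔛 𝔵')).trans
      (𝒯.le_kleisli φ b.rel _ (by rw [← 𝒯.m_nat, h𝔛]) _)

lemma IsTFunctor.isTModRel_modStar (hf : IsTFunctor a b f) :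
    𝒯.IsTModRel a.rel b.rel (modStar b f) :=
  ⟨fun 𝔵 y => (kleisli_map_le hf b.rel 𝔵 y).trans (b.comp _ y),
    fun 𝔵 y => (𝒯.kleisli_comp_map_le b.rel b.rel f 𝔵 y).trans (b.comp _ y)⟩

theorem IsLeftAdjoint.cocontinuous (hla : IsLeftAdjoint a b f) : Cocontinuous a b f := by
  obtain ⟨hf, g, hg, hadj⟩ := hla
  intro A Z as cs h ψ k _ _ _ hcol 𝔷 y
  have hstar : ∀ {W : Type u} (k : W → X) (𝔴 : T W),
      modStar b (f ∘ k) 𝔴 y = modStar a k 𝔴 (g y) := fun k 𝔴 =>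
    (modStar_comp b f k 𝔴 y).trans (hadj.modStar_eq_modCostar hf hg _ y)
  rw [hstar, hcol 𝔷 (g y)]
  simp only [extend, hstar]

theorem Cocontinuous.isLeftAdjoint (ha : Cocomplete a) (hf : IsTFunctor a b f)
    (hc : Cocontinuous a b f) : IsLeftAdjoint a b f := by
  obtain ⟨g, hg, hgcol⟩ := ha X Y a b id (isTFunctor_id a) (modStar b f) hf.isTModRel_modStar
  have hfgcol := hc X Y a b id (modStar b f) g (isTFunctor_id a) hf.isTModRel_modStar hg hgcol
  have hunit : ∀ x, UnderlyingLE a x (g (f x)) := fun x =>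
    calc 𝒯.unit ≤ a.rel (𝒯.e (g (f x))) (g (f x)) := a.le_refl _
      _ = 𝒯.extend (modStar a id) (modStar b f) (𝒯.map f (𝒯.e x)) (g (f x)) := by
        rw [← hgcol, modStar, e_nat, e_nat]
      _ ≤ modStar a id (𝒯.e x) (g (f x)) :=
        extend_le _ (𝒯.m_map_e _) (𝒯.unit_le_Txi_map (modStar b f) 𝒯.e f
          (fun x => le_of_le_of_eq (b.le_refl (f x)) (by rw [modStar, e_nat])) _) _
      _ = a.rel (𝒯.e x) (g (f x)) := by rw [modStar, map_id, id]
  have hcounit : ∀ y, UnderlyingLE b (f (g y)) y := fun y =>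
    calc 𝒯.unit ≤ 𝒯.extend (modStar b (f ∘ id)) (modStar b f) (𝒯.e y) y :=
          unit_le_extend fun 𝔛 => (𝒯.Txi_comp_left_le b.rel (𝒯.map f) 𝔛 (𝒯.e y)).trans
            ((Txi_e_le b _ y).trans_eq (by rw [← 𝒯.m_nat]; rfl))
      _ = b.rel (𝒯.e (f (g y))) y := by rw [← hfgcol, modStar, e_nat]; rfl
  exact ⟨hf, g, hg, fun 𝔵 x => (hunit x).rel_le 𝔵, fun 𝔶 y => (hcounit y).rel_le 𝔶⟩

end Colimit

section Presheaf

variable {X Y : Type u} {a : 𝒯.TCatStr X} {b : 𝒯.TCatStr Y} {f : X → Y}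

lemma unitRel_e (X : Type u) (x : X) : 𝒯.unitRel X (𝒯.e x) x = 𝒯.unit :=
  iSup_pos rfl

lemma IsPresheaf.comap {ψ : T Y → V} (hψ : IsPresheaf b ψ) (hf : IsTFunctor a b f) :
    IsPresheaf a (fun 𝔵 => ψ (𝒯.map f 𝔵)) :=
  ⟨fun 𝔵 _ => (kleisli_map_le hf _ 𝔵 _).trans (hψ.1 _ _),
    fun 𝔵 _ => (𝒯.kleisli_comp_map_le _ _ f 𝔵 _).trans (hψ.2 _ _)⟩

lemma IsPresheaf.xi_map_le {τ : T X → V} (hτ : IsPresheaf a τ) {𝔛 : T (T X)}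
    (h𝔛 : 𝒯.map (fun _ => PUnit.unit) 𝔛 = 𝒯.e PUnit.unit) : 𝒯.xi (𝒯.map τ 𝔛) ≤ τ (𝒯.m 𝔛) :=
  calc 𝒯.xi (𝒯.map τ 𝔛)
      ≤ 𝒯.Txi (fun 𝔵 (_ : PUnit) => τ 𝔵) (𝒯.map id 𝔛) (𝒯.map (fun _ => PUnit.unit) 𝔛) :=
        𝒯.xi_map_le_Txi (fun 𝔵 (_ : PUnit) => τ 𝔵) id _ 𝔛
    _ = 𝒯.tens (𝒯.Txi (fun 𝔵 (_ : PUnit) => τ 𝔵) 𝔛 (𝒯.e PUnit.unit))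
          (𝒯.unitRel PUnit (𝒯.e PUnit.unit) PUnit.unit) := by
        rw [unitRel_e, tens_unit, map_id, h𝔛]; rfl
    _ ≤ 𝒯.kleisli (𝒯.unitRel PUnit) (fun 𝔵 _ => τ 𝔵) (𝒯.m 𝔛) PUnit.unit :=
        𝒯.le_kleisli _ _ 𝔛 rfl _
    _ ≤ τ (𝒯.m 𝔛) := hτ.2 _ _

lemma powRel_le_ihom (𝔓 : T (T X → V)) (φ : T X → V) (𝔮 : T (T X × (T X → V)))
    (h : 𝒯.map Prod.snd 𝔮 = 𝔓) :
    𝒯.powRel X 𝔓 φ ≤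
      𝒯.ihom (𝒯.xi (𝒯.map (fun p => p.2 p.1) 𝔮)) (φ (𝒯.m (𝒯.map Prod.fst 𝔮))) :=
  iInf_le (α := V) _ (⟨𝔮, h⟩ : {q : T (T X × (T X → V)) // 𝒯.map Prod.snd q = 𝔓})

lemma le_powRel {𝔓 : T (T X → V)} {φ : T X → V} {c : V}
    (h : ∀ 𝔮 : T (T X × (T X → V)), 𝒯.map Prod.snd 𝔮 = 𝔓 →
      𝒯.tens (𝒯.xi (𝒯.map (fun p => p.2 p.1) 𝔮)) c ≤ φ (𝒯.m (𝒯.map Prod.fst 𝔮))) :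
    c ≤ 𝒯.powRel X 𝔓 φ :=
  le_iInf fun 𝔮 => (𝒯.le_ihom_iff).2 (h 𝔮.1 𝔮.2)

lemma unit_le_powRel_e {σ τ : T X → V} (hτ : IsPresheaf a τ) (hστ : ∀ 𝔵, σ 𝔵 ≤ τ 𝔵) :
    𝒯.unit ≤ 𝒯.powRel X (𝒯.e σ) τ := by
  refine le_powRel fun 𝔮 h𝔮 => ?_
  have hev := 𝒯.map_eq_map_of_map_eq_e Prod.snd (fun p ρ => ρ p.1) h𝔮
  rw [tens_unit, hev, ← map_map _ σ Prod.fst]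
  refine (𝒯.xi_mono _ _ hστ _).trans (hτ.xi_map_le ?_)
  rw [map_map, ← map_map _ (fun _ => PUnit.unit) Prod.snd, h𝔮, e_nat]

variable {hsa : 𝒯.TCatStr (Hat a)}

lemma IsHatStr.rel_e (hhsa : IsHatStr a hsa) (φ ψ : Hat a) :
    hsa.rel (𝒯.e φ) ψ = 𝒯.powRel X (𝒯.e φ.1) ψ.1 :=
  (hhsa _ _).trans (congrArg (fun 𝔓 => 𝒯.powRel X 𝔓 ψ.1) (𝒯.e_nat Subtype.val φ))

lemma underlyingLE_hat_iff (hhsa : IsHatStr a hsa) {φ ψ : Hat a} :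
    UnderlyingLE hsa φ ψ ↔ ∀ 𝔵, φ.1 𝔵 ≤ ψ.1 𝔵 := by
  rw [UnderlyingLE, hhsa.rel_e]
  refine ⟨fun h 𝔵 => ?_, fun h => unit_le_powRel_e ψ.2 h⟩
  have h𝔵 := h.trans (powRel_le_ihom _ ψ.1 (𝒯.e (𝔵, φ.1)) (e_nat _ _ _))
  rwa [e_nat, xi_e, e_nat, m_e, unit_le_ihom_iff] at h𝔵

end Presheaf

section Sup

variable {X Y : Type u} {a : 𝒯.TCatStr X} {b : 𝒯.TCatStr Y} {hsa : 𝒯.TCatStr (Hat a)}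
  {ya : X → Hat a} {S : Hat a → X}

lemma le_rel_sup (hhsa : IsHatStr a hsa) (hya : IsYoneda a ya)
    (hadj : IsAdjunction hsa a S ya) (ψ : Hat a) (𝔵 : T X) : ψ.1 𝔵 ≤ a.rel 𝔵 (S ψ) :=
  ((underlyingLE_hat_iff hhsa).1 (hadj.underlyingLE_unit ψ) 𝔵).trans_eq (hya _ 𝔵)

lemma sup_underlyingLE (hhsa : IsHatStr a hsa) (hya : IsYoneda a ya) (hS : IsTFunctor hsa a S)
    (hadj : IsAdjunction hsa a S ya) {ψ : Hat a} {x : X} (h : ∀ 𝔵, ψ.1 𝔵 ≤ a.rel 𝔵 x) :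
    UnderlyingLE a (S ψ) x :=
  hadj.underlyingLE_of_le_right hS
    ((underlyingLE_hat_iff hhsa).2 fun 𝔵 => (h 𝔵).trans_eq (hya x 𝔵).symm)

lemma le_hatMapRel (b : 𝒯.TCatStr Y) (f : X → Y) (σ : T X → V) (𝔵 : T X) :
    σ 𝔵 ≤ hatMapRel b f σ (𝒯.map f 𝔵) := by
  have hm : 𝒯.m (𝒯.map (fun x => 𝒯.e (f x)) 𝔵) = 𝒯.map f 𝔵 := by rw [← map_map, m_map_e]
  have hT : 𝒯.unit ≤ 𝒯.Txi (modCostar b f) (𝒯.map (fun x => 𝒯.e (f x)) 𝔵) 𝔵 := by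
    simpa only [map_id, id] using
      𝒯.unit_le_Txi_map (modCostar b f) _ id (fun x => b.le_refl (f x)) 𝔵
  calc σ 𝔵 = 𝒯.tens 𝒯.unit (σ 𝔵) := (𝒯.unit_tens _).symm
    _ ≤ 𝒯.tens (𝒯.Txi (modCostar b f) (𝒯.map (fun x => 𝒯.e (f x)) 𝔵) 𝔵) (σ 𝔵) :=
        𝒯.tens_mono_left hT
    _ ≤ hatMapRel b f σ (𝒯.map f 𝔵) := 𝒯.le_kleisli (fun 𝔵 _ => σ 𝔵) (modCostar b f) _ hm 𝔵

lemma hatMapRel_le (b : 𝒯.TCatStr Y) (f : X → Y) {σ : T X → V} {y : Y}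
    (hσ : ∀ 𝔵, σ 𝔵 ≤ modStar b f 𝔵 y) (𝔶 : T Y) : hatMapRel b f σ 𝔶 ≤ b.rel 𝔶 y :=
  𝒯.kleisli_le fun 𝔜 h𝔜 𝔵 =>
    calc _ ≤ 𝒯.tens (𝒯.Txi b.rel 𝔜 (𝒯.map f 𝔵)) (b.rel (𝒯.map f 𝔵) y) :=
          (𝒯.tens_mono_left (𝒯.Txi_comp_right_le b.rel f 𝔜 𝔵)).trans (𝒯.tens_mono_right (hσ 𝔵))
      _ ≤ 𝒯.kleisli b.rel b.rel 𝔶 y := 𝒯.le_kleisli _ _ 𝔜 h𝔜 _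
      _ ≤ b.rel 𝔶 y := b.comp 𝔶 y

variable {hsb : 𝒯.TCatStr (Hat b)} {yb : Y → Hat b} {SupY : Hat b → Y} {f : X → Y}
  {fh : Hat a → Hat b}

lemma sup_hatMap_underlyingLE (hfh : IsHatMap a b f fh) (hhsb : IsHatStr b hsb)
    (hyb : IsYoneda b yb) (hSY : IsTFunctor hsb b SupY) (hSYadj : IsAdjunction hsb b SupY yb)
    {ψ : Hat a} {y : Y} (h : ∀ 𝔵, ψ.1 𝔵 ≤ modStar b f 𝔵 y) : UnderlyingLE b (SupY (fh ψ)) y :=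
  sup_underlyingLE hhsb hyb hSY hSYadj fun 𝔶 => (hfh ψ 𝔶).trans_le (hatMapRel_le b f h 𝔶)

end Sup

section SupHatMap

variable {X Y : Type u} {a : 𝒯.TCatStr X} {b : 𝒯.TCatStr Y} {hsa : 𝒯.TCatStr (Hat a)}
  {hsb : 𝒯.TCatStr (Hat b)} {ya : X → Hat a} {yb : Y → Hat b} {SupX : Hat a → X}
  {SupY : Hat b → Y} {f : X → Y} {fh : Hat a → Hat b}

lemma isTFunctor_of_val_eq_modStar (hhsa : IsHatStr a hsa) {j : Y → Hat a}
    (hj : ∀ y 𝔵, (j y).1 𝔵 = modStar b f 𝔵 y) : IsTFunctor b hsa j := by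
  intro 𝔶 y
  rw [hhsa]
  refine le_powRel fun 𝔮 h𝔮 => ?_
  have hval : 𝒯.map Subtype.val (𝒯.map j 𝔶) = 𝒯.map (fun y' 𝔵 => modStar b f 𝔵 y') 𝔶 :=
    (𝒯.map_map _ _ _).trans (congrArg (𝒯.map · 𝔶) (funext fun y' => funext (hj y')))
  -- by (BC), `𝔮` and `𝔶` have a common lift along `Prod.snd` and `y ↦ f_*(-, y)`
  obtain ⟨𝔯, h₁, h₂⟩ := 𝒯.map_bc Prod.snd _ 𝔮 𝔶 (h𝔮.trans hval)
  have hev : 𝒯.xi (𝒯.map (fun p : T X × (T X → V) => p.2 p.1) 𝔮) ≤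
      𝒯.Txi b.rel (𝒯.map (𝒯.map f) (𝒯.map Prod.fst 𝔮)) 𝔶 := by
    rw [← h₁, ← h₂, map_map, map_map, map_map]
    refine le_of_eq_of_le ?_ (𝒯.xi_map_le_Txi b.rel _ _ 𝔯)
    congr 2
    funext r
    exact congrFun r.2 r.1.1.1
  calc _ ≤ 𝒯.tens (𝒯.Txi b.rel (𝒯.map (𝒯.map f) (𝒯.map Prod.fst 𝔮)) 𝔶) (b.rel 𝔶 y) :=
        𝒯.tens_mono_left hev
    _ ≤ 𝒯.kleisli b.rel b.rel (𝒯.map f (𝒯.m (𝒯.map Prod.fst 𝔮))) y :=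
        𝒯.le_kleisli _ _ _ (𝒯.m_nat f _).symm 𝔶
    _ ≤ (j y).1 (𝒯.m (𝒯.map Prod.fst 𝔮)) := (b.comp _ y).trans_eq (hj y _).symm

theorem IsLeftAdjoint.funEquiv_sup_hatMap (hla : IsLeftAdjoint a b f) (hhsa : IsHatStr a hsa)
    (hhsb : IsHatStr b hsb) (hya : IsYoneda a ya) (hyb : IsYoneda b yb)
    (hSX : IsTFunctor hsa a SupX) (hSXadj : IsAdjunction hsa a SupX ya)
    (hSY : IsTFunctor hsb b SupY) (hSYadj : IsAdjunction hsb b SupY yb)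
    (hfh : IsHatMap a b f fh) : FunEquiv b (f ∘ SupX) (SupY ∘ fh) := by
  obtain ⟨hf, g, hg, hadj⟩ := hla
  refine funEquiv_of_underlyingLE (fun ψ => ?_) (fun ψ => ?_)
  · refine hadj.underlyingLE_of_le_right hf (sup_underlyingLE hhsa hya hSX hSXadj fun 𝔵 => ?_)
    calc ψ.1 𝔵 ≤ (fh ψ).1 (𝒯.map f 𝔵) := (le_hatMapRel b f ψ.1 𝔵).trans_eq (hfh ψ _).symm
      _ ≤ b.rel (𝒯.map f 𝔵) (SupY (fh ψ)) := le_rel_sup hhsb hyb hSYadj _ _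
      _ = a.rel 𝔵 (g (SupY (fh ψ))) := hadj.modStar_eq_modCostar hf hg _ _
  · exact sup_hatMap_underlyingLE hfh hhsb hyb hSY hSYadj fun 𝔵 =>
      (le_rel_sup hhsa hya hSXadj ψ 𝔵).trans (hf 𝔵 _)

theorem isLeftAdjoint_of_funEquiv_sup_hatMap (hhsa : IsHatStr a hsa) (hhsb : IsHatStr b hsb)
    (hya : IsYoneda a ya) (hyb : IsYoneda b yb) (hSX : IsTFunctor hsa a SupX)
    (hSXadj : IsAdjunction hsa a SupX ya) (hSY : IsTFunctor hsb b SupY)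
    (hSYadj : IsAdjunction hsb b SupY yb) (hf : IsTFunctor a b f) (hfh : IsHatMap a b f fh)
    (h : FunEquiv b (f ∘ SupX) (SupY ∘ fh)) : IsLeftAdjoint a b f := by
  let j : Y → Hat a := fun y => ⟨fun 𝔵 => (yb y).1 (𝒯.map f 𝔵), (yb y).2.comap hf⟩
  have hj : ∀ y 𝔵, (j y).1 𝔵 = modStar b f 𝔵 y := fun y 𝔵 => hyb y _
  have hunit : ∀ x, UnderlyingLE a x (SupX (j (f x))) := fun x =>
    calc 𝒯.unit ≤ b.rel (𝒯.e (f x)) (f x) := b.le_refl _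
      _ = (j (f x)).1 (𝒯.e x) := by rw [hj, modStar, e_nat]
      _ ≤ a.rel (𝒯.e x) (SupX (j (f x))) := le_rel_sup hhsa hya hSXadj _ _
  have hcounit : ∀ y, UnderlyingLE b (f (SupX (j y))) y := fun y =>
    (h.underlyingLE (j y)).trans
      (sup_hatMap_underlyingLE hfh hhsb hyb hSY hSYadj fun 𝔵 => (hj y 𝔵).le)
  exact ⟨hf, SupX ∘ j, (isTFunctor_of_val_eq_modStar hhsa hj).comp hSX,
    fun 𝔵 x => (hunit x).rel_le 𝔵, fun 𝔶 y => (hcounit y).rel_le 𝔶⟩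

end SupHatMap

theorem statement5_general (𝒯 : TopTheory V T) {X Y : Type u}
    (a : 𝒯.TCatStr X) (b : 𝒯.TCatStr Y)
    (hsa : 𝒯.TCatStr (Hat a)) (hhsa : IsHatStr a hsa)
    (hsb : 𝒯.TCatStr (Hat b)) (hhsb : IsHatStr b hsb)
    (ya : X → Hat a) (hya : IsYoneda a ya)
    (yb : Y → Hat b) (hyb : IsYoneda b yb)
    (ha : Cocomplete a)
    (SupX : Hat a → X) (hSX : IsTFunctor hsa a SupX) (hSXadj : IsAdjunction hsa a SupX ya)
    (SupY : Hat b → Y) (hSY : IsTFunctor hsb b SupY) (hSYadj : IsAdjunction hsb b SupY yb)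
    (f : X → Y) (hf : IsTFunctor a b f)
    (fh : Hat a → Hat b) (hfh : IsHatMap a b f fh) :
    (IsLeftAdjoint a b f ↔ Cocontinuous a b f) ∧
    (IsLeftAdjoint a b f ↔ FunEquiv b (f ∘ SupX) (SupY ∘ fh)) :=
  ⟨⟨IsLeftAdjoint.cocontinuous, Cocontinuous.isLeftAdjoint ha hf⟩,
    fun hla => hla.funEquiv_sup_hatMap hhsa hhsb hya hyb hSX hSXadj hSY hSYadj hfh,
    isLeftAdjoint_of_funEquiv_sup_hatMap hhsa hhsb hya hyb hSX hSXadj hSY hSYadj hf hfh⟩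

/-- Proposition 4.1. Let `f : X → Y` be a `𝒯`-functor between
cocomplete `𝒯`-categories and let `Sup_X ⊣ y_X`, `Sup_Y ⊣ y_Y` be the left adjoints of
the Yoneda functors. The following are equivalent: (i) `f` is left adjoint; (ii) `f` is
cocontinuous; (iii) `f · Sup_X ≅ Sup_Y · f̂`. -/
theorem statement5 (𝒯 : TopTheory V T) {X Y : Type u}
    (a : 𝒯.TCatStr X) (b : 𝒯.TCatStr Y)
    (hsa : 𝒯.TCatStr (Hat a)) (hhsa : IsHatStr a hsa)
    (hsb : 𝒯.TCatStr (Hat b)) (hhsb : IsHatStr b hsb)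
    (ya : X → Hat a) (hya : IsYoneda a ya) (hyaf : IsTFunctor a hsa ya)
    (yb : Y → Hat b) (hyb : IsYoneda b yb) (hybf : IsTFunctor b hsb yb)
    (ha : Cocomplete a) (hb : Cocomplete b)
    (SupX : Hat a → X) (hSX : IsTFunctor hsa a SupX) (hSXadj : IsAdjunction hsa a SupX ya)
    (SupY : Hat b → Y) (hSY : IsTFunctor hsb b SupY) (hSYadj : IsAdjunction hsb b SupY yb)
    (f : X → Y) (hf : IsTFunctor a b f)
    (fh : Hat a → Hat b) (hfh : IsHatMap a b f fh) :
    (IsLeftAdjoint a b f ↔ Cocontinuous a b f) ∧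
    (IsLeftAdjoint a b f ↔ FunEquiv b (f ∘ SupX) (SupY ∘ fh)) :=
  statement5_general 𝒯 a b hsa hhsa hsb hhsb ya hya yb hyb ha SupX hSX hSXadj SupY hSY hSYadj f hf
    fh hfh

end TopTheory

end Paper
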